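/- Let $(U_N)_{N\ge 1}$ be a sequence of symmetric $d\times d$ real matrices with $a_- I \le U_N \le a_+ I$ for constants $0< a_- \le a_+$, and let $A^\star$ be symmetric positive definite. Assume $\limsup_{N\to\infty} p^T U_N p \le p^T A^\star p$ and $\limsup_{N\to\infty} p^T U_N^{-1} p \le p^T (A^\star)^{-1} p$ for every $p\in\mathbb{R}^d$. Then $U_N \to A^\star$ as $N\to\infty$. -/

import Mathlib

/-!
For `p ≠ 0` put `q = A⋆ p` and `c = pᵀ A⋆ p = qᵀ (A⋆)⁻¹ q > 0`. Cauchy–Schwarz in the inner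
product defined by `U_N` gives `c² = (p ⬝ q)² ≤ (pᵀ U_N p) (qᵀ U_N⁻¹ q)`, and the second factor
has `limsup ≤ c`, so `liminf pᵀ U_N p ≥ c`. Together with `limsup pᵀ U_N p ≤ c` the quadratic forms
converge, and polarization turns this into convergence of the symmetric matrices. The Loewner
bounds serve to make `U_N` positive definite and both quadratic forms bounded above; for an
unbounded real sequence `limsup` is a junk value and the hypotheses would say nothing.
-/

open Matrix Filter Topology

theorem tendsto_of_sq_le_mul_of_limsup_le {ι : Type*} {l : Filter ι} {x y : ι → ℝ} {c : ℝ}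
    (hc : 0 < c) (hx : ∀ i, 0 ≤ x i) (hxy : ∀ i, c ^ 2 ≤ x i * y i)
    (hxb : IsBoundedUnder (· ≤ ·) l x) (hyb : IsBoundedUnder (· ≤ ·) l y)
    (hxc : limsup x l ≤ c) (hyc : limsup y l ≤ c) : Tendsto x l (𝓝 c) := by
  have hxy_pos : ∀ i, 0 < x i * y i := fun i => (pow_pos hc 2).trans_le (hxy i)
  have hy : ∀ i, 0 < y i := fun i => pos_of_mul_pos_right (hxy_pos i) (hx i)
  refine tendsto_order.2
    ⟨fun b hb => ?_, fun b hb => eventually_lt_of_limsup_lt (hxc.trans_lt hb) hxb⟩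
  rcases le_or_gt b 0 with hb0 | hb0
  · exact Eventually.of_forall fun i => hb0.trans_lt (pos_of_mul_pos_left (hxy_pos i) (hy i).le)
  · -- eventually `y i * b < c² ≤ x i * y i`
    have hcb : c < c ^ 2 / b := by rw [lt_div_iff₀ hb0]; nlinarith
    filter_upwards [eventually_lt_of_limsup_lt (hyc.trans_lt hcb) hyb] with i hi
    rw [lt_div_iff₀ hb0] at hi
    exact lt_of_mul_lt_mul_right (by linarith [hxy i]) (hy i).le

namespace Matrix

variable {n : Type*}

theorem PosSemidef.posDef_of_sub_smul_one [DecidableEq n] {M : Matrix n n ℝ} {a : ℝ} (ha : 0 < a)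
    (h : (M - a • 1).PosSemidef) : M.PosDef := by
  simpa using PosDef.posSemidef_add h (PosDef.one.smul ha)

variable [Fintype n]

theorem IsSymm.two_mul_dotProduct_mulVec {R : Type*} [CommRing R] {M : Matrix n n R}
    (hM : M.IsSymm) (x y : n → R) :
    2 * (x ⬝ᵥ M *ᵥ y) = (x + y) ⬝ᵥ M *ᵥ (x + y) - x ⬝ᵥ M *ᵥ x - y ⬝ᵥ M *ᵥ y := by
  have hyx : y ⬝ᵥ M *ᵥ x = x ⬝ᵥ M *ᵥ y := by rw [← dotProduct_transpose_mulVec, hM.eq]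
  simp only [mulVec_add, dotProduct_add, add_dotProduct, hyx]
  ring

theorem PosSemidef.sq_dotProduct_mulVec_le {M : Matrix n n ℝ} (hM : M.PosSemidef) (x y : n → ℝ) :
    (x ⬝ᵥ M *ᵥ y) ^ 2 ≤ (x ⬝ᵥ M *ᵥ x) * (y ⬝ᵥ M *ᵥ y) := by
  let _ := M.toSeminormedAddCommGroup hM
  let _ := M.toInnerProductSpace hM
  have := real_inner_mul_inner_self_le x y
  change (M *ᵥ y ⬝ᵥ star x) * (M *ᵥ y ⬝ᵥ star x) ≤ (M *ᵥ x ⬝ᵥ star x) * (M *ᵥ y ⬝ᵥ star y) at this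
  simpa only [star_trivial, dotProduct_comm (M *ᵥ _), sq] using this

theorem dotProduct_mulVec_le_of_posSemidef_sub {A B : Matrix n n ℝ} (h : (B - A).PosSemidef)
    (x : n → ℝ) : x ⬝ᵥ A *ᵥ x ≤ x ⬝ᵥ B *ᵥ x := by
  simpa [sub_mulVec] using h.dotProduct_mulVec_nonneg x

variable [DecidableEq n]

theorem tendsto_of_tendsto_dotProduct_mulVec_self {ι : Type*} {l : Filter ι}
    {M : ι → Matrix n n ℝ} {A : Matrix n n ℝ} (hM : ∀ i, (M i).IsSymm) (hA : A.IsSymm)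
    (h : ∀ x, Tendsto (fun i => x ⬝ᵥ M i *ᵥ x) l (𝓝 (x ⬝ᵥ A *ᵥ x))) : Tendsto M l (𝓝 A) := by
  have hbilin : ∀ x y, Tendsto (fun i => x ⬝ᵥ M i *ᵥ y) l (𝓝 (x ⬝ᵥ A *ᵥ y)) := by
    intro x y
    have := (((h (x + y)).sub (h x)).sub (h y)).const_mul (1 / 2 : ℝ)
    simp only [← (hM _).two_mul_dotProduct_mulVec, ← hA.two_mul_dotProduct_mulVec] at this
    simpa using this
  refine tendsto_pi_nhds.2 fun i => tendsto_pi_nhds.2 fun j => ?_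
  simpa [mulVec_single_one, single_dotProduct] using hbilin (Pi.single i 1) (Pi.single j 1)

theorem dotProduct_smul_one_mulVec (a : ℝ) (x : n → ℝ) :
    x ⬝ᵥ (a • 1 : Matrix n n ℝ) *ᵥ x = a * (x ⬝ᵥ x) := by
  simp [smul_mulVec]

theorem PosDef.mulVec_inv_mulVec {M : Matrix n n ℝ} (hM : M.PosDef) (x : n → ℝ) :
    M *ᵥ (M⁻¹ *ᵥ x) = x := by
  rw [mulVec_mulVec, mul_nonsing_inv _ hM.det_pos.ne'.isUnit, one_mulVec]

theorem PosDef.sq_dotProduct_le {M : Matrix n n ℝ} (hM : M.PosDef) (x y : n → ℝ) :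
    (x ⬝ᵥ y) ^ 2 ≤ (x ⬝ᵥ M *ᵥ x) * (y ⬝ᵥ M⁻¹ *ᵥ y) := by
  simpa [hM.mulVec_inv_mulVec, dotProduct_comm] using
    hM.posSemidef.sq_dotProduct_mulVec_le x (M⁻¹ *ᵥ y)

theorem dotProduct_inv_mulVec_le {M : Matrix n n ℝ} {a : ℝ} (ha : 0 < a)
    (h : (M - a • 1).PosSemidef) (x : n → ℝ) : x ⬝ᵥ M⁻¹ *ᵥ x ≤ (x ⬝ᵥ x) / a := by
  have hM := h.posDef_of_sub_smul_one ha
  set r := M⁻¹ *ᵥ x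
  have hs : x ⬝ᵥ r = r ⬝ᵥ M *ᵥ r := by rw [hM.mulVec_inv_mulVec, dotProduct_comm]
  have hlow : a * (r ⬝ᵥ r) ≤ x ⬝ᵥ r := by
    simpa [hs, dotProduct_smul_one_mulVec] using dotProduct_mulVec_le_of_posSemidef_sub h r
  have hcs : (x ⬝ᵥ r) ^ 2 ≤ (x ⬝ᵥ x) * (r ⬝ᵥ r) := by
    simpa using PosSemidef.one.sq_dotProduct_mulVec_le x r
  have hnn : 0 ≤ x ⬝ᵥ r := by simpa using hM.inv.posSemidef.dotProduct_mulVec_nonneg x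
  have hx : 0 ≤ x ⬝ᵥ x := by simpa using PosSemidef.one.dotProduct_mulVec_nonneg x
  rw [le_div_iff₀ ha]
  rcases hnn.eq_or_lt with h0 | hpos
  · rw [← h0]; simpa using hx
  · nlinarith [mul_le_mul_of_nonneg_left hlow hx]

theorem tendsto_dotProduct_mulVec_self_of_limsup_le {ι : Type*} {l : Filter ι}
    {U : ι → Matrix n n ℝ} {A : Matrix n n ℝ} (hU : ∀ i, (U i).PosDef) (hA : A.PosDef)
    (hUb : ∀ p, IsBoundedUnder (· ≤ ·) l fun i => p ⬝ᵥ U i *ᵥ p)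
    (hUinvb : ∀ p, IsBoundedUnder (· ≤ ·) l fun i => p ⬝ᵥ (U i)⁻¹ *ᵥ p)
    (h1 : ∀ p, limsup (fun i => p ⬝ᵥ U i *ᵥ p) l ≤ p ⬝ᵥ A *ᵥ p)
    (h2 : ∀ p, limsup (fun i => p ⬝ᵥ (U i)⁻¹ *ᵥ p) l ≤ p ⬝ᵥ A⁻¹ *ᵥ p) (p : n → ℝ) :
    Tendsto (fun i => p ⬝ᵥ U i *ᵥ p) l (𝓝 (p ⬝ᵥ A *ᵥ p)) := by
  rcases eq_or_ne p 0 with rfl | hp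
  · simpa using tendsto_const_nhds
  have hq : A *ᵥ p ⬝ᵥ A⁻¹ *ᵥ (A *ᵥ p) = p ⬝ᵥ A *ᵥ p := by
    rw [mulVec_mulVec, nonsing_inv_mul _ hA.det_pos.ne'.isUnit, one_mulVec, dotProduct_comm]
  refine tendsto_of_sq_le_mul_of_limsup_le (by simpa using hA.dotProduct_mulVec_pos hp)
    (fun i => by simpa using (hU i).posSemidef.dotProduct_mulVec_nonneg p) (fun i => ?_)
    (hUb p) (hUinvb (A *ᵥ p)) (h1 p) (hq ▸ h2 (A *ᵥ p))
  simpa using (hU i).sq_dotProduct_le p (A *ᵥ p)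

end Matrix

theorem squeeze_matrices_tendsto_general {d : ℕ}
    (U : ℕ → Matrix (Fin d) (Fin d) ℝ)
    (Astar : Matrix (Fin d) (Fin d) ℝ)
    (aminus aplus : ℝ) (haminus : 0 < aminus)
    (hlower : ∀ N, (U N - aminus • (1 : Matrix (Fin d) (Fin d) ℝ)).PosSemidef)
    (hupper : ∀ N, (aplus • (1 : Matrix (Fin d) (Fin d) ℝ) - U N).PosSemidef)
    (hA : Astar.PosDef)
    (h1 : ∀ p : Fin d → ℝ,
      limsup (fun N => p ⬝ᵥ (U N).mulVec p) atTop ≤ p ⬝ᵥ Astar.mulVec p)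
    (h2 : ∀ p : Fin d → ℝ,
      limsup (fun N => p ⬝ᵥ (U N)⁻¹.mulVec p) atTop ≤ p ⬝ᵥ Astar⁻¹.mulVec p) :
    Tendsto U atTop (nhds Astar) := by
  have hU : ∀ N, (U N).PosDef := fun N => (hlower N).posDef_of_sub_smul_one haminus
  have hUb : ∀ p, IsBoundedUnder (· ≤ ·) atTop fun N => p ⬝ᵥ U N *ᵥ p := fun p =>
    isBoundedUnder_of ⟨aplus * (p ⬝ᵥ p), fun N => by
      simpa [dotProduct_smul_one_mulVec] using dotProduct_mulVec_le_of_posSemidef_sub (hupper N) p⟩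
  have hUinvb : ∀ p, IsBoundedUnder (· ≤ ·) atTop fun N => p ⬝ᵥ (U N)⁻¹ *ᵥ p := fun p =>
    isBoundedUnder_of ⟨(p ⬝ᵥ p) / aminus, fun N => dotProduct_inv_mulVec_le haminus (hlower N) p⟩
  exact tendsto_of_tendsto_dotProduct_mulVec_self
    (fun N => isHermitian_iff_isSymm.1 (hU N).isHermitian) (isHermitian_iff_isSymm.1 hA.isHermitian)
    (tendsto_dotProduct_mulVec_self_of_limsup_le hU hA hUb hUinvb h1 h2)

/-- Squeezing/compactness argument: if `U_N` are symmetric matrices with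
`a₋ I ≤ U_N ≤ a₊ I` in the Loewner order (`0 < a₋ ≤ a₊`), `A⋆` is symmetric positive
definite, and for every `p` both `limsup pᵀ U_N p ≤ pᵀ A⋆ p` and
`limsup pᵀ U_N⁻¹ p ≤ pᵀ (A⋆)⁻¹ p`, then `U_N → A⋆`. -/
theorem squeeze_matrices_tendsto {d : ℕ}
    (U : ℕ → Matrix (Fin d) (Fin d) ℝ)
    (Astar : Matrix (Fin d) (Fin d) ℝ)
    (aminus aplus : ℝ) (haminus : 0 < aminus) (ha : aminus ≤ aplus)
    (hUsymm : ∀ N, (U N).IsSymm)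
    (hlower : ∀ N, (U N - aminus • (1 : Matrix (Fin d) (Fin d) ℝ)).PosSemidef)
    (hupper : ∀ N, (aplus • (1 : Matrix (Fin d) (Fin d) ℝ) - U N).PosSemidef)
    (hA : Astar.PosDef) (hAsymm : Astar.IsSymm)
    (h1 : ∀ p : Fin d → ℝ,
      limsup (fun N => p ⬝ᵥ (U N).mulVec p) atTop ≤ p ⬝ᵥ Astar.mulVec p)
    (h2 : ∀ p : Fin d → ℝ,
      limsup (fun N => p ⬝ᵥ (U N)⁻¹.mulVec p) atTop ≤ p ⬝ᵥ Astar⁻¹.mulVec p) :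
    Tendsto U atTop (nhds Astar) :=
  squeeze_matrices_tendsto_general U Astar aminus aplus haminus hlower hupper hA h1 h2
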